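/- arXiv:2212.14005 — 5 statements merged into one kernel-verified Lean document; each statement's English description precedes it below -/
import Mathlib

section
/- Let P be a finite poset with a linear extension x_1, ..., x_n of its elements, and let K = J(P) be the set of order ideals of P. Then the composition τ_{x_n} ∘ ⋯ ∘ τ_{x_1} of toggles applied in linear extension order equals rowmotion: for every order ideal I, (τ_{x_n} ∘ ⋯ ∘ τ_{x_1})(I) = P \ ∇(max(I)). -/
open Finset

variable {α : Type*} [Fintype α] [DecidableEq α] [PartialOrder α]
  [DecidableRel ((· ≤ ·) : α → α → Prop)]

/-- `I` is an order ideal (down-set) of the poset `α`. -/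
def IsOrderIdeal (I : Finset α) : Prop := ∀ x y : α, x ≤ y → y ∈ I → x ∈ I

instance : DecidablePred (IsOrderIdeal (α := α)) := fun I => by
  unfold IsOrderIdeal; infer_instance

/-- `∇(S) = {x : ∃ s ∈ S, s ≤ x}`. -/
def upSet (S : Finset α) : Finset α := univ.filter fun x => ∃ s ∈ S, s ≤ x

/-- The set of maximal elements of `I`. -/
def maxSet (I : Finset α) : Finset α := I.filter fun x => ∀ y ∈ I, x ≤ y → y = x

/-- The toggle `τ_z` acting on order ideals: `τ_z(I) = I △ {z}` if this is an order
ideal, and `I` otherwise. -/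
def toggleIdeal (z : α) (I : Finset α) : Finset α :=
  if IsOrderIdeal (symmDiff I {z}) then symmDiff I {z} else I

/-! After toggling the elements of a down-closed set `S`, the current ideal agrees with
`Row(I)` on `S` and with `I` off `S`. Toggling next an element `z` whose strict lower set lies in
`S` decides the membership of `z` exactly as `Row(I)` does: if `z ∈ I`, then `z` survives iff it is
not maximal in `I`; if `z ∉ I`, then `z` enters iff everything below it is already in `Row(I)`. -/

section Toggle

variable {A : Finset α} {z : α}

lemma mem_toggleIdeal_of_ne {x : α} (hxz : x ≠ z) : x ∈ toggleIdeal z A ↔ x ∈ A := by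
  unfold toggleIdeal
  split_ifs <;> simp [mem_symmDiff, hxz]

omit [Fintype α] [DecidableRel ((· ≤ ·) : α → α → Prop)] in
lemma isOrderIdeal_erase_iff (hA : IsOrderIdeal A) :
    IsOrderIdeal (A.erase z) ↔ ∀ y ∈ A, ¬ z < y := by
  refine ⟨fun h y hy hzy => ?_, fun h x y hxy hy => ?_⟩
  · simpa using h z y hzy.le (mem_erase.2 ⟨hzy.ne', hy⟩)
  · obtain ⟨hyz, hyA⟩ := mem_erase.1 hy
    refine mem_erase.2 ⟨?_, hA x y hxy hyA⟩
    rintro rfl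
    exact h y hyA (lt_of_le_of_ne hxy (Ne.symm hyz))

omit [Fintype α] [DecidableRel ((· ≤ ·) : α → α → Prop)] in
lemma isOrderIdeal_insert_iff (hA : IsOrderIdeal A) :
    IsOrderIdeal (insert z A) ↔ ∀ y < z, y ∈ A := by
  refine ⟨fun h y hyz => ?_, fun h x y hxy hy => ?_⟩
  · exact (mem_insert.1 (h y z hyz.le (mem_insert_self z A))).resolve_left hyz.ne
  · rcases mem_insert.1 hy with rfl | hyA
    · rcases hxy.eq_or_lt with rfl | hlt
      · exact mem_insert_self x A
      · exact mem_insert_of_mem (h x hlt)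
    · exact mem_insert_of_mem (hA x y hxy hyA)

lemma mem_toggleIdeal_self_of_mem (hA : IsOrderIdeal A) (hz : z ∈ A) :
    z ∈ toggleIdeal z A ↔ ∃ y ∈ A, z < y := by
  have hsymm : symmDiff A {z} = A.erase z := by
    ext x
    by_cases hxz : x = z <;> simp [mem_symmDiff, hxz, hz]
  unfold toggleIdeal
  rw [hsymm]
  split_ifs with h
  · simpa using (isOrderIdeal_erase_iff hA).1 h
  · simpa [hz, isOrderIdeal_erase_iff hA] using h

lemma mem_toggleIdeal_self_of_notMem (hA : IsOrderIdeal A) (hz : z ∉ A) :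
    z ∈ toggleIdeal z A ↔ ∀ y < z, y ∈ A := by
  have hsymm : symmDiff A {z} = insert z A := by
    ext x
    by_cases hxz : x = z <;> simp [mem_symmDiff, hxz, hz]
  unfold toggleIdeal
  rw [hsymm]
  split_ifs with h
  · simpa using (isOrderIdeal_insert_iff hA).1 h
  · simpa [hz, isOrderIdeal_insert_iff hA] using h

end Toggle

section Rowmotion

def rowmotion (I : Finset α) : Finset α := univ \ upSet (maxSet I)

variable {I : Finset α}

lemma mem_rowmotion {x : α} : x ∈ rowmotion I ↔ ∀ m ∈ maxSet I, ¬ m ≤ x := by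
  simp [rowmotion, upSet]

lemma isOrderIdeal_rowmotion : IsOrderIdeal (rowmotion I) := by
  intro x y hxy hy
  rw [mem_rowmotion] at hy ⊢
  exact fun m hm hmx => hy m hm (hmx.trans hxy)

lemma mem_rowmotion_iff_of_mem {z : α} (hz : z ∈ I) : z ∈ rowmotion I ↔ ∃ y ∈ I, z < y := by
  rw [mem_rowmotion]
  constructor
  · intro h
    by_contra! hmax
    exact h z (mem_filter.2 ⟨hz, fun y hy hzy => (hzy.eq_or_lt.resolve_right (hmax y hy)).symm⟩) le_rfl
  · rintro ⟨y, hy, hzy⟩ m hm hmz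
    exact (hmz.trans_lt hzy).ne ((mem_filter.1 hm).2 y hy (hmz.trans hzy.le)).symm

lemma mem_rowmotion_iff_of_notMem {z : α} (hz : z ∉ I) :
    z ∈ rowmotion I ↔ ∀ y < z, y ∈ rowmotion I := by
  refine ⟨fun h y hyz => isOrderIdeal_rowmotion y z hyz.le h, fun h => ?_⟩
  rw [mem_rowmotion]
  intro m hm hmz
  have hmI : m ∈ I := (mem_filter.1 hm).1
  have hmz' : m < z := lt_of_le_of_ne hmz (fun h => hz (h ▸ hmI))
  exact mem_rowmotion.1 (h m hmz') m hm le_rfl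

end Rowmotion

section Interpolation

variable {I S : Finset α}

lemma isOrderIdeal_rowmotion_inter_union_sdiff (hI : IsOrderIdeal I) (hS : IsOrderIdeal S) :
    IsOrderIdeal (rowmotion I ∩ S ∪ I \ S) := by
  intro x y hxy hy
  simp only [mem_union, mem_inter, mem_sdiff] at hy ⊢
  rcases hy with ⟨hyR, hyS⟩ | ⟨hyI, hyS⟩
  · exact Or.inl ⟨isOrderIdeal_rowmotion x y hxy hyR, hS x y hxy hyS⟩
  · by_cases hxS : x ∈ S
    · have hxy' : x < y := lt_of_le_of_ne hxy (fun h => hyS (h ▸ hxS))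
      exact Or.inl ⟨(mem_rowmotion_iff_of_mem (hI x y hxy hyI)).2 ⟨y, hyI, hxy'⟩, hxS⟩
    · exact Or.inr ⟨hI x y hxy hyI, hxS⟩

lemma toggleIdeal_rowmotion_inter_union_sdiff (hI : IsOrderIdeal I) (hS : IsOrderIdeal S)
    {z : α} (hzS : z ∉ S) (hzS' : IsOrderIdeal (insert z S)) :
    toggleIdeal z (rowmotion I ∩ S ∪ I \ S) = rowmotion I ∩ insert z S ∪ I \ insert z S := by
  set A := rowmotion I ∩ S ∪ I \ S
  have hA : IsOrderIdeal A := isOrderIdeal_rowmotion_inter_union_sdiff hI hS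
  ext x
  rcases eq_or_ne x z with rfl | hxz
  · simp only [mem_union, mem_inter, mem_sdiff, mem_insert_self, not_true_eq_false,
      and_false, or_false, and_true]
    by_cases hxI : x ∈ I
    · have hxA : x ∈ A := by simp [A, hxI, hzS]
      rw [mem_toggleIdeal_self_of_mem hA hxA, mem_rowmotion_iff_of_mem hxI]
      refine exists_congr fun y => and_congr_left fun hxy => ?_
      have hyS : y ∉ S := fun hy => hzS (hS x y hxy.le hy)
      simp [A, hyS]
    · have hxA : x ∉ A := by simp [A, hxI, hzS]
      rw [mem_toggleIdeal_self_of_notMem hA hxA, mem_rowmotion_iff_of_notMem hxI]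
      refine forall₂_congr fun y hyx => ?_
      have hyS : y ∈ S := (isOrderIdeal_insert_iff hS).1 hzS' y hyx
      simp [A, hyS]
  · rw [mem_toggleIdeal_of_ne hxz]
    simp [A, hxz]

lemma foldl_toggleIdeal_rowmotion_inter_union_sdiff (hI : IsOrderIdeal I) (l : List α)
    (hnd : l.Nodup) (hlin : l.Pairwise fun a b => ¬ b < a) (hS : IsOrderIdeal S)
    (hlS : ∀ x, x ∈ l ↔ x ∉ S) :
    l.foldl (fun A z => toggleIdeal z A) (rowmotion I ∩ S ∪ I \ S) = rowmotion I := by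
  induction l generalizing S with
  | nil =>
    have hSuniv : S = univ := eq_univ_of_forall fun x => by simpa using hlS x
    simp [hSuniv]
  | cons z t ih =>
    obtain ⟨hzt, hnd⟩ := List.nodup_cons.1 hnd
    obtain ⟨hz, hlin⟩ := List.pairwise_cons.1 hlin
    have hzS : z ∉ S := (hlS z).1 List.mem_cons_self
    have hzS' : IsOrderIdeal (insert z S) := by
      refine (isOrderIdeal_insert_iff hS).2 fun y hyz => ?_
      by_contra hyS
      rcases List.mem_cons.1 ((hlS y).2 hyS) with rfl | hyt
      · exact hyz.false
      · exact hz y hyt hyz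
    rw [List.foldl_cons, toggleIdeal_rowmotion_inter_union_sdiff hI hS hzS hzS']
    refine ih hnd hlin hzS' fun x => ?_
    rw [mem_insert, not_or, ← hlS, List.mem_cons]
    constructor
    · exact fun hx => ⟨fun h => hzt (h ▸ hx), Or.inr hx⟩
    · exact fun ⟨hxz, hx⟩ => hx.resolve_left hxz

end Interpolation

/-- Applying the toggles `τ_{x_1}, ..., τ_{x_n}` in the order given by a linear
extension `x_1, ..., x_n` of `P` to an order ideal `I` yields rowmotion
`Row(I) = P \ ∇(max(I))`. -/
theorem toggles_linearExtension_eq_rowmotion (l : List α) (hnd : l.Nodup)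
    (hall : ∀ z : α, z ∈ l)
    (hlin : ∀ i j : Fin l.length, l.get i < l.get j → (i : ℕ) < (j : ℕ))
    (I : Finset α) (hI : IsOrderIdeal I) :
    l.foldl (fun A z => toggleIdeal z A) I = univ \ upSet (maxSet I) := by
  have hpair : l.Pairwise fun a b => ¬ b < a :=
    List.pairwise_iff_get.2 fun i j hij hji => (hlin j i hji).not_gt hij
  show _ = rowmotion I
  simpa using foldl_toggleIdeal_rowmotion_inter_union_sdiff hI l hnd hpair (S := ∅)
    (fun _ _ _ h => absurd h (notMem_empty _)) (by simpa using hall)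
end

section
/- Let P be a finite set, K a collection of subsets of P, and let H^P|_K be the graph on vertex set K where A, A' are adjacent iff |A △ A'| = 1. Fix probabilities p_x ∈ (0,1) for each x ∈ P and an ordering x of P. The toggle Markov chain T(K, x) (whose transition from state A applies, in the fixed order, the random toggles that toggle x out of A with probability p_x, toggle x into A whenever possible, and otherwise leave A unchanged) is irreducible if and only if H^P|_K is connected. -/
/-!
A positive-probability step of the chain is a sweep `toggleSeq` in which the removals of some set
`U ⊆ A` are skipped. For fixed `U` the sweep is a bijection of the finitely many states containing
`U` (toggles are involutions), so repeating it leads back: reachability in the chain is symmetric.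
Every toggle either fixes a state or moves it along an edge of `H^P|_K`, which gives one direction.
Conversely, if `w` comes first in the order and `w ∈ X`, then `X` (skipping `w`) and `X △ {w}`
(toggling `w` back in first) sweep to the same state, so they communicate; for a later element,
each step of the chain without `w` is simulated with `w` prepended, by skipping `w` or by a detour
through `A △ {w}`.
-/

open Finset

variable {α : Type*} [Fintype α] [DecidableEq α]

/-- The toggle `τ_z` on a collection `K` of subsets of `P`. -/
def toggle (K : Finset (Finset α)) (z : α) (A : Finset α) : Finset α :=
  if symmDiff A {z} ∈ K then symmDiff A {z} else A

/-- Apply the toggles indexed by the list `l`, in order (leftmost first). -/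
def toggleSeq (K : Finset (Finset α)) (l : List α) (A : Finset α) : Finset α :=
  l.foldl (fun B z => toggle K z B) A

/-- The transition probability of the toggle Markov chain `T(K, x)` from `A` to `A'`:
a subset `U ⊆ A` of skipped elements is chosen, each `u ∈ A` being skipped
independently with probability `1 - p u`, and the chain moves to the state obtained
from `A` by applying the toggles `τ_z` for `z ∉ U` in the order given by the list `l`. -/
noncomputable def transProb (K : Finset (Finset α)) (l : List α) (p : α → ℝ)
    (A A' : Finset α) : ℝ :=
  ∑ U ∈ A.powerset,
    if toggleSeq K (l.filter (· ∉ U)) A = A' then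
      (∏ u ∈ U, (1 - p u)) * ∏ z ∈ A \ U, p z
    else 0


namespace Relation

variable {β : Type*} {r : β → β → Prop}

theorem ReflTransGen.symm_of_swap_le (h : Function.swap r ≤ ReflTransGen r) {a b : β}
    (hab : ReflTransGen r a b) : ReflTransGen r b a :=
  reflTransGen_closed h _ _ (reflTransGen_swap.mpr hab)

theorem reflTransGen_apply_of_mem_periodicPts {g : β → β} (hr : ∀ b, r b (g b)) {a : β}
    (ha : a ∈ Function.periodicPts g) : ReflTransGen r (g a) a := by
  have orbit : ∀ n, ReflTransGen r (g a) (g^[n] (g a)) := fun n => by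
    induction n with
    | zero => rfl
    | succ n ih => exact ih.tail (by rw [Function.iterate_succ_apply']; exact hr _)
  obtain ⟨n, hn⟩ :=
    Nat.exists_eq_succ_of_ne_zero (Function.minimalPeriod_pos_of_mem_periodicPts ha).ne'
  simpa only [← Function.iterate_succ_apply, ← hn, Function.iterate_minimalPeriod] using orbit n

end Relation

open Relation

section

variable {P : Type*} [DecidableEq P] {K : Finset (Finset P)} {l : List P} {z w : P}
  {A B : Finset P}

theorem toggle_of_mem (h : symmDiff A {z} ∈ K) : toggle K z A = symmDiff A {z} := if_pos h

theorem toggle_of_notMem (h : symmDiff A {z} ∉ K) : toggle K z A = A := if_neg h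

theorem toggle_mem (hA : A ∈ K) : toggle K z A ∈ K := by
  unfold toggle; split_ifs with h; exacts [h, hA]

theorem toggle_toggle (hA : A ∈ K) : toggle K z (toggle K z A) = A := by
  by_cases h : symmDiff A {z} ∈ K
  · rw [toggle_of_mem h, toggle_of_mem (by rwa [symmDiff_symmDiff_cancel_right]),
      symmDiff_symmDiff_cancel_right]
  · rw [toggle_of_notMem h, toggle_of_notMem h]

theorem mem_toggle_of_ne {u : P} (h : u ≠ z) : u ∈ toggle K z A ↔ u ∈ A := by
  unfold toggle; split_ifs
  · simp [mem_symmDiff, h]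
  · rfl

theorem subset_toggle_of_notMem (h : z ∉ A) : A ⊆ toggle K z A := fun _ hu =>
  (mem_toggle_of_ne (ne_of_mem_of_not_mem hu h)).2 hu

theorem toggleSeq_cons (m : List P) : toggleSeq K (z :: m) A = toggleSeq K m (toggle K z A) :=
  rfl

theorem toggleSeq_append (m₁ m₂ : List P) :
    toggleSeq K (m₁ ++ m₂) A = toggleSeq K m₂ (toggleSeq K m₁ A) :=
  List.foldl_append

theorem toggleSeq_mem (m : List P) (hA : A ∈ K) : toggleSeq K m A ∈ K := by
  induction m generalizing A with
  | nil => exact hA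
  | cons z m ih => exact ih (toggle_mem hA)

theorem mem_toggleSeq_of_notMem {u : P} {m : List P} (h : u ∉ m) :
    u ∈ toggleSeq K m A ↔ u ∈ A := by
  induction m generalizing A with
  | nil => rfl
  | cons z m ih =>
    rw [List.mem_cons, not_or] at h
    rw [toggleSeq_cons, ih h.2, mem_toggle_of_ne h.1]

theorem toggleSeq_reverse_toggleSeq (m : List P) (hA : A ∈ K) :
    toggleSeq K m.reverse (toggleSeq K m A) = A := by
  induction m generalizing A with
  | nil => rfl
  | cons z m ih =>
    rw [toggleSeq_cons, List.reverse_cons, toggleSeq_append, ih (toggle_mem hA)]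
    exact toggle_toggle hA

theorem toggleSeq_injOn (m : List P) : Set.InjOn (toggleSeq K m) K := fun A hA B hB h => by
  rw [← toggleSeq_reverse_toggleSeq m hA, h, toggleSeq_reverse_toggleSeq m hB]

def HypercubeAdj (K : Finset (Finset P)) (A B : Finset P) : Prop :=
  A ∈ K ∧ B ∈ K ∧ (symmDiff A B).card = 1

theorem HypercubeAdj.exists_toggle_eq (h : HypercubeAdj K A B) : ∃ z, toggle K z A = B := by
  obtain ⟨-, hB, hcard⟩ := h
  obtain ⟨z, hz⟩ := card_eq_one.1 hcard
  have hB' : symmDiff A {z} = B := by rw [← hz, symmDiff_symmDiff_cancel_left]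
  exact ⟨z, by rw [toggle_of_mem (hB' ▸ hB), hB']⟩

theorem reflTransGen_hypercubeAdj_toggle (hA : A ∈ K) :
    ReflTransGen (HypercubeAdj K) A (toggle K z A) := by
  by_cases h : symmDiff A {z} ∈ K
  · refine .single ⟨hA, toggle_mem hA, ?_⟩
    rw [toggle_of_mem h, symmDiff_symmDiff_cancel_left, card_singleton]
  · rw [toggle_of_notMem h]

theorem reflTransGen_hypercubeAdj_toggleSeq (m : List P) (hA : A ∈ K) :
    ReflTransGen (HypercubeAdj K) A (toggleSeq K m A) := by
  induction m generalizing A with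
  | nil => rfl
  | cons z m ih => exact (reflTransGen_hypercubeAdj_toggle hA).trans (ih (toggle_mem hA))

/-- `B` is reached from `A` in one step of the chain with positive probability; `U` is the set of
elements of `A` whose removal is skipped. -/
def ToggleStep (K : Finset (Finset P)) (l : List P) (A B : Finset P) : Prop :=
  A ∈ K ∧ ∃ U ⊆ A, toggleSeq K (l.filter (· ∉ U)) A = B

theorem toggleStep_iff_transProb_pos {p : P → ℝ} (hp : ∀ z, 0 < p z ∧ p z < 1) :
    ToggleStep K l A B ↔ A ∈ K ∧ B ∈ K ∧ 0 < transProb K l p A B := by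
  set term := fun U => if toggleSeq K (l.filter (· ∉ U)) A = B then
    (∏ u ∈ U, (1 - p u)) * ∏ z ∈ A \ U, p z else 0
  have weight_pos : ∀ U, 0 < (∏ u ∈ U, (1 - p u)) * ∏ z ∈ A \ U, p z := fun U =>
    mul_pos (prod_pos fun u _ => sub_pos.2 (hp u).2) (prod_pos fun z _ => (hp z).1)
  have term_nonneg : ∀ U ∈ A.powerset, 0 ≤ term U := fun U _ => by
    unfold term; split_ifs
    exacts [(weight_pos U).le, le_rfl]
  have term_pos : ∀ U, 0 < term U ↔ toggleSeq K (l.filter (· ∉ U)) A = B := fun U => by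
    unfold term; split_ifs with h
    exacts [iff_of_true (weight_pos U) h, iff_of_false (lt_irrefl 0) h]
  change _ ↔ _ ∧ _ ∧ 0 < ∑ U ∈ A.powerset, term U
  rw [sum_pos_iff_of_nonneg term_nonneg]
  constructor
  · rintro ⟨hA, U, hUA, hU⟩
    exact ⟨hA, hU ▸ toggleSeq_mem _ hA, U, mem_powerset.2 hUA, (term_pos U).2 hU⟩
  · rintro ⟨hA, -, U, hUA, hU⟩
    exact ⟨hA, U, mem_powerset.1 hUA, (term_pos U).1 hU⟩

theorem ToggleStep.reflTransGen_symm (h : ToggleStep K l A B) :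
    ReflTransGen (ToggleStep K l) B A := by
  obtain ⟨hA, U, hUA, rfl⟩ := h
  set m := l.filter (· ∉ U)
  let S := {C // C ∈ K.filter (U ⊆ ·)}
  have sweep_mem : ∀ C : S, toggleSeq K m C ∈ K.filter (U ⊆ ·) := fun ⟨C, hC⟩ => by
    rw [mem_filter] at hC ⊢
    refine ⟨toggleSeq_mem m hC.1, fun u hu => ?_⟩
    exact (mem_toggleSeq_of_notMem (by simp [m, hu])).2 (hC.2 hu)
  let g : S → S := fun C => ⟨toggleSeq K m C, sweep_mem C⟩
  have hg : Function.Injective g := fun C D hCD => Subtype.ext <|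
    toggleSeq_injOn m (mem_filter.1 C.2).1 (mem_filter.1 D.2).1 (congrArg Subtype.val hCD)
  have hreturn := reflTransGen_apply_of_mem_periodicPts
    (r := fun C D : S => ToggleStep K l C D) (g := g)
    (fun C => ⟨(mem_filter.1 C.2).1, U, (mem_filter.1 C.2).2, rfl⟩)
    (hg.mem_periodicPts ⟨A, mem_filter.2 ⟨hA, hUA⟩⟩)
  exact hreturn.lift Subtype.val fun _ _ h => h

theorem reflTransGen_toggleStep_symm (h : ReflTransGen (ToggleStep K l) A B) :
    ReflTransGen (ToggleStep K l) B A :=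
  h.symm_of_swap_le fun _ _ h => h.reflTransGen_symm

theorem reflTransGen_toggleStep_cons_toggle (hw : w ∉ l) (hA : A ∈ K) :
    ReflTransGen (ToggleStep K (w :: l)) A (toggle K w A) := by
  by_cases hK : symmDiff A {w} ∈ K
  swap
  · rw [toggle_of_notMem hK]
  rw [toggle_of_mem hK]
  have common_target : ∀ X ∈ K, symmDiff X {w} ∈ K → w ∈ X →
      ReflTransGen (ToggleStep K (w :: l)) X (symmDiff X {w}) := by
    intro X hX hX' hwX
    have skip : ToggleStep K (w :: l) X (toggleSeq K l X) := by
      refine ⟨hX, {w}, singleton_subset_iff.2 hwX, ?_⟩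
      rw [List.filter_cons_of_neg (by simp), List.filter_eq_self.2 fun a ha => ?_]
      simpa using ne_of_mem_of_not_mem ha hw
    have toggleBack : ToggleStep K (w :: l) (symmDiff X {w}) (toggleSeq K l X) := by
      refine ⟨hX', ∅, empty_subset _, ?_⟩
      rw [List.filter_eq_self.2 fun a _ => by simp, toggleSeq_cons, toggle_of_mem (by
        rwa [symmDiff_symmDiff_cancel_right]), symmDiff_symmDiff_cancel_right]
    exact (ReflTransGen.single skip).trans toggleBack.reflTransGen_symm
  by_cases hwA : w ∈ A
  · exact common_target A hA hK hwA
  · apply reflTransGen_toggleStep_symm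
    have hwA' : w ∈ symmDiff A {w} := by simp [mem_symmDiff, hwA]
    simpa only [symmDiff_symmDiff_cancel_right] using
      common_target _ hK (by rwa [symmDiff_symmDiff_cancel_right]) hwA'

theorem ToggleStep.reflTransGen_cons (hw : w ∉ l) (h : ToggleStep K l A B) :
    ReflTransGen (ToggleStep K (w :: l)) A B := by
  obtain ⟨hA, U, hUA, rfl⟩ := h
  by_cases hwA : w ∈ A
  · refine .single ⟨hA, insert w U, insert_subset hwA hUA, ?_⟩
    rw [List.filter_cons_of_neg (by simp), List.filter_congr fun a ha => ?_]
    simp [ne_of_mem_of_not_mem ha hw]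
  · have hwU : w ∉ U := fun h => hwA (hUA h)
    refine (reflTransGen_toggleStep_cons_toggle hw hA).tail
      ⟨toggle_mem hA, U, hUA.trans (subset_toggle_of_notMem hwA), ?_⟩
    rw [List.filter_cons_of_pos (by simpa), toggleSeq_cons, toggle_toggle hA]

theorem reflTransGen_toggleStep_toggle (hl : l.Nodup) (hz : z ∈ l) (hA : A ∈ K) :
    ReflTransGen (ToggleStep K l) A (toggle K z A) := by
  induction l with
  | nil => cases hz
  | cons w l ih =>
    obtain ⟨hw, hl⟩ := List.nodup_cons.1 hl
    rcases List.mem_cons.1 hz with rfl | hz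
    · exact reflTransGen_toggleStep_cons_toggle hw hA
    · exact reflTransGen_closed (fun _ _ h => h.reflTransGen_cons hw) _ _ (ih hl hz)

theorem reflTransGen_toggleStep_eq_hypercubeAdj (hl : l.Nodup) (hall : ∀ z, z ∈ l) :
    ReflTransGen (ToggleStep K l) = ReflTransGen (HypercubeAdj K) := by
  apply le_antisymm <;> apply reflTransGen_closed
  · rintro A _ ⟨hA, U, -, rfl⟩
    exact reflTransGen_hypercubeAdj_toggleSeq _ hA
  · intro A B h
    obtain ⟨z, rfl⟩ := h.exists_toggle_eq
    exact reflTransGen_toggleStep_toggle hl (hall z) h.1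

end

/-- The toggle Markov chain `T(K, x)` (with all probabilities strictly between `0` and
`1`) is irreducible if and only if the induced subgraph `H^P|_K` of the hypercube graph
on `K` (where `A, A'` are adjacent iff `|A △ A'| = 1`) is connected. -/
theorem toggleMarkovChain_irreducible_iff_hypercube_connected
    (K : Finset (Finset α)) (l : List α) (hnd : l.Nodup) (hall : ∀ z : α, z ∈ l)
    (p : α → ℝ) (hp : ∀ z : α, 0 < p z ∧ p z < 1) :
    (∀ A ∈ K, ∀ A' ∈ K, Relation.ReflTransGen
        (fun B B' : Finset α => B ∈ K ∧ B' ∈ K ∧ 0 < transProb K l p B B') A A') ↔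
    (∀ A ∈ K, ∀ A' ∈ K, Relation.ReflTransGen
        (fun B B' : Finset α => B ∈ K ∧ B' ∈ K ∧ (symmDiff B B').card = 1) A A') := by
  have hstep : (fun B B' : Finset α => B ∈ K ∧ B' ∈ K ∧ 0 < transProb K l p B B') =
      ToggleStep K l := by
    funext B B'
    exact propext (toggleStep_iff_transProb_pos hp).symm
  rw [hstep, reflTransGen_toggleStep_eq_hypercubeAdj hnd hall]
  rfl
end

section
/- Let P be a finite poset and fix probabilities p_x ∈ (0,1) for x ∈ P. The rowmotion Markov chain on J(P), with transition probability from I to I' equal to (∏_{x ∈ min(P\I')} p_x)(∏_{x' ∈ max(I)\min(P\I')} (1 - p_{x'})) if min(P \ I') ⊆ max(I), and 0 otherwise, has stationary distribution π(I) = (1/Z) ∏_{x ∈ I} p_x^{-1}, where Z = Σ_{I' ∈ J(P)} ∏_{x' ∈ I'} p_{x'}^{-1}. -/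
open Finset

variable {α : Type*} [Fintype α] [DecidableEq α] [PartialOrder α]
  [DecidableRel ((· ≤ ·) : α → α → Prop)]

/-- The set of minimal elements of `T`. -/
def minSet (T : Finset α) : Finset α := T.filter fun x => ∀ y ∈ T, y ≤ x → y = x

/-- The transition probability of the rowmotion Markov chain `M_{J(P)}` from `I` to
`I'`. -/
noncomputable def rowTrans (p : α → ℝ) (I I' : Finset α) : ℝ :=
  if minSet (univ \ I') ⊆ maxSet I then
    (∏ x ∈ minSet (univ \ I'), p x) *
      ∏ x ∈ maxSet I \ minSet (univ \ I'), (1 - p x)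
  else 0

/-! Write `S = min(P \ I')` and `w(I) = ∏_{x ∈ I} p_x⁻¹`. The ideals `I` with `S ⊆ max I` are
exactly those with `S ⊆ I ⊆ I' ∪ S`, and `w(I' ∪ S) ∏_{x ∈ S} p_x = w(I')`, so stationarity
reduces to the identity `∑_{A ⊆ I ⊆ U, I ideal} w(I) ∏_{x ∈ max I \ A} (1 - p_x) = w(U)` for an
ideal `U ⊇ A`. It holds by induction on `|U \ A|`: if `max U ⊆ A`, then `U` is the only such
ideal; otherwise pick `m ∈ max U \ A`. The ideals avoiding `m` contribute `w(U \ {m}) = p_m w(U)`,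
and those containing `m` contribute `(1 - p_m) w(U)`, by the induction hypothesis for `A ∪ {m}`. -/

lemma mem_maxSet {I : Finset α} {x : α} : x ∈ maxSet I ↔ Maximal (· ∈ I) x := by
  simp only [maxSet, mem_filter, maximal_iff, eq_comm]

lemma mem_minSet {T : Finset α} {x : α} : x ∈ minSet T ↔ Minimal (· ∈ T) x := by
  simp only [minSet, mem_filter, minimal_iff, eq_comm]

lemma IsOrderIdeal.erase_of_mem_maxSet {U : Finset α} (hU : IsOrderIdeal U) {m : α}
    (hm : m ∈ maxSet U) : IsOrderIdeal (U.erase m) := by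
  intro x y hxy hy
  obtain ⟨hym, hyU⟩ := mem_erase.1 hy
  refine mem_erase.2 ⟨?_, hU x y hxy hyU⟩
  rintro rfl
  exact hym (mem_maxSet.1 hm |>.eq_of_ge hyU hxy)

lemma mem_maxSet_of_subset {I U : Finset α} {m : α} (hm : m ∈ maxSet U) (hmI : m ∈ I)
    (hIU : I ⊆ U) : m ∈ maxSet I :=
  mem_maxSet.2 <| (mem_maxSet.1 hm).mono (fun _ hx => hIU hx) hmI

def idealsBetween (A U : Finset α) : Finset (Finset α) :=
  univ.filter fun I => IsOrderIdeal I ∧ A ⊆ I ∧ I ⊆ U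

lemma mem_idealsBetween {A U I : Finset α} :
    I ∈ idealsBetween A U ↔ IsOrderIdeal I ∧ A ⊆ I ∧ I ⊆ U := by
  simp [idealsBetween]

lemma idealsBetween_eq_singleton {A U : Finset α} (hU : IsOrderIdeal U) (hAU : A ⊆ U)
    (hmax : maxSet U ⊆ A) : idealsBetween A U = {U} := by
  ext I
  simp only [mem_idealsBetween, mem_singleton]
  constructor
  · rintro ⟨hI, hAI, hIU⟩
    refine hIU.antisymm fun x hx => ?_
    obtain ⟨m, hxm, hm⟩ := U.exists_le_maximal hx
    exact hI x m hxm (hAI (hmax (mem_maxSet.2 hm)))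
  · rintro rfl
    exact ⟨hU, hAU, subset_rfl⟩

lemma filter_notMem_idealsBetween {A U : Finset α} {m : α} :
    (idealsBetween A U).filter (m ∉ ·) = idealsBetween A (U.erase m) := by
  ext I
  simp only [mem_filter, mem_idealsBetween, subset_erase]
  tauto

lemma filter_mem_idealsBetween {A U : Finset α} {m : α} :
    (idealsBetween A U).filter (m ∈ ·) = idealsBetween (insert m A) U := by
  ext I
  simp only [mem_filter, mem_idealsBetween, insert_subset_iff]
  tauto

theorem sum_idealsBetween_prod_inv_mul_prod_one_sub {K : Type*} [Field K] (p : α → K)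
    (hp : ∀ x, p x ≠ 0) {A U : Finset α} (hU : IsOrderIdeal U) (hAU : A ⊆ U) :
    ∑ I ∈ idealsBetween A U, (∏ x ∈ I, (p x)⁻¹) * ∏ x ∈ maxSet I \ A, (1 - p x) =
      ∏ x ∈ U, (p x)⁻¹ := by
  induction h : #(U \ A) using Nat.strong_induction_on generalizing A U with
  | _ n ih =>
  by_cases hmax : maxSet U ⊆ A
  · simp [idealsBetween_eq_singleton hU hAU hmax, sdiff_eq_empty_iff_subset.2 hmax]
  obtain ⟨m, hmU, hmA⟩ := not_subset.1 hmax
  have hm : m ∈ U := (mem_maxSet.1 hmU).prop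
  have hcard : #((U \ A).erase m) < n := h ▸ card_erase_lt_of_mem (mem_sdiff.2 ⟨hm, hmA⟩)
  have with_m : ∑ I ∈ idealsBetween (insert m A) U,
      (∏ x ∈ I, (p x)⁻¹) * ∏ x ∈ maxSet I \ A, (1 - p x) =
        (1 - p m) * ∏ x ∈ U, (p x)⁻¹ := by
    rw [← ih _ (by rwa [sdiff_insert]) hU (insert_subset hm hAU) rfl, mul_sum]
    refine sum_congr rfl fun I hI => ?_
    obtain ⟨-, hmAI, hIU⟩ := mem_idealsBetween.1 hI
    have hmI : m ∈ maxSet I \ A :=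
      mem_sdiff.2 ⟨mem_maxSet_of_subset hmU (insert_subset_iff.1 hmAI).1 hIU, hmA⟩
    rw [← mul_prod_erase _ _ hmI, sdiff_insert]
    ring
  have without_m : ∑ I ∈ idealsBetween A (U.erase m),
      (∏ x ∈ I, (p x)⁻¹) * ∏ x ∈ maxSet I \ A, (1 - p x) =
        ∏ x ∈ U.erase m, (p x)⁻¹ :=
    ih _ (by rwa [erase_sdiff_comm]) (hU.erase_of_mem_maxSet hmU)
      (subset_erase.2 ⟨hAU, hmA⟩) rfl
  rw [← sum_filter_add_sum_filter_not _ (m ∈ ·), filter_mem_idealsBetween,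
    filter_notMem_idealsBetween, with_m, without_m, ← mul_prod_erase _ _ hm]
  field_simp [hp m]
  ring

lemma IsOrderIdeal.union_minSet_compl {I' : Finset α} (hI' : IsOrderIdeal I') :
    IsOrderIdeal (I' ∪ minSet (univ \ I')) := by
  intro x y hxy hy
  by_cases hx : x ∈ I'
  · exact mem_union_left _ hx
  rcases mem_union.1 hy with hy | hy
  · exact absurd (hI' x y hxy hy) hx
  · rw [(mem_minSet.1 hy).eq_of_le (by simpa using hx) hxy]
    exact mem_union_right _ hy

lemma minSet_compl_subset_maxSet_iff {I' : Finset α} (hI' : IsOrderIdeal I') (I : Finset α) :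
    minSet (univ \ I') ⊆ maxSet I ↔
      minSet (univ \ I') ⊆ I ∧ I ⊆ I' ∪ minSet (univ \ I') := by
  constructor
  · intro hS
    refine ⟨fun s hs => (mem_maxSet.1 (hS hs)).prop, fun x hx => ?_⟩
    by_cases hxI' : x ∈ I'
    · exact mem_union_left _ hxI'
    obtain ⟨s, hsx, hs⟩ := (univ \ I').exists_le_minimal (by simpa using hxI')
    rw [← (mem_maxSet.1 (hS (mem_minSet.2 hs))).eq_of_le hx hsx]
    exact mem_union_right _ (mem_minSet.2 hs)
  · rintro ⟨hSI, hIU⟩ s hs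
    have hs' := mem_minSet.1 hs
    refine mem_maxSet.2 ⟨hSI hs, fun y hy hsy => ?_⟩
    rcases mem_union.1 (hIU hy) with hy | hy
    · exact absurd (hI' s y hsy hy) (by simpa using hs'.prop)
    · exact ((mem_minSet.1 hy).eq_of_le hs'.prop hsy).ge

theorem sum_prod_inv_mul_rowTrans (p : α → ℝ) (hp : ∀ x, p x ≠ 0) {I' : Finset α}
    (hI' : IsOrderIdeal I') :
    ∑ I ∈ univ.filter IsOrderIdeal, (∏ x ∈ I, (p x)⁻¹) * rowTrans p I I' =
      ∏ x ∈ I', (p x)⁻¹ := by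
  simp only [rowTrans, mul_ite, mul_zero]
  rw [← sum_filter]
  set S := minSet (univ \ I')
  have hdisj : Disjoint I' S :=
    disjoint_right.2 fun s hs => by simpa using (mem_minSet.1 hs).prop
  have hsupport :
      (univ.filter IsOrderIdeal).filter (S ⊆ maxSet ·) = idealsBetween S (I' ∪ S) := by
    ext I
    simp only [mem_filter, mem_univ, true_and, mem_idealsBetween]
    exact and_congr_right fun _ => minSet_compl_subset_maxSet_iff hI' I
  calc ∑ I ∈ (univ.filter IsOrderIdeal).filter (S ⊆ maxSet ·),
        (∏ x ∈ I, (p x)⁻¹) * ((∏ x ∈ S, p x) * ∏ x ∈ maxSet I \ S, (1 - p x))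
      = ∑ I ∈ idealsBetween S (I' ∪ S),
          (∏ x ∈ S, p x) * ((∏ x ∈ I, (p x)⁻¹) * ∏ x ∈ maxSet I \ S, (1 - p x)) := by
        rw [hsupport]
        exact sum_congr rfl fun _ _ => by ring
    _ = (∏ x ∈ S, p x) * ∏ x ∈ I' ∪ S, (p x)⁻¹ := by
        rw [← mul_sum, sum_idealsBetween_prod_inv_mul_prod_one_sub p hp hI'.union_minSet_compl
          subset_union_right]
    _ = ∏ x ∈ I', (p x)⁻¹ := by
        rw [prod_union hdisj, mul_left_comm, ← prod_mul_distrib,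
          prod_congr rfl fun x _ => mul_inv_cancel₀ (hp x), prod_const_one, mul_one]

/-- The rowmotion Markov chain of `J(P)` has stationary distribution
`π(I) = (1/Z) ∏_{x ∈ I} (p x)⁻¹`, where `Z = Σ_{I' ∈ J(P)} ∏_{x' ∈ I'} (p x')⁻¹`. -/
theorem rowmotion_stationary (p : α → ℝ) (hp : ∀ x : α, 0 < p x ∧ p x < 1) :
    ∀ I' : Finset α, IsOrderIdeal I' →
      ∑ I ∈ univ.filter (fun I : Finset α => IsOrderIdeal I),
        ((1 / ∑ J ∈ univ.filter (fun J : Finset α => IsOrderIdeal J), ∏ x ∈ J, (p x)⁻¹)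
            * ∏ x ∈ I, (p x)⁻¹) * rowTrans p I I'
      = (1 / ∑ J ∈ univ.filter (fun J : Finset α => IsOrderIdeal J), ∏ x ∈ J, (p x)⁻¹)
          * ∏ x ∈ I', (p x)⁻¹ := by
  intro I' hI'
  simp_rw [mul_assoc, ← mul_sum]
  rw [sum_prod_inv_mul_rowTrans p (fun x => (hp x).1.ne') hI']
end

section
/- Let P be an n-element antichain, p ∈ (0,1), and let Q be the |2^P| × |2^P| transition matrix with Q(I, I') = p^{|P \ I'|} (1 − p)^{|I ∩ I'|} if P \ I' ⊆ I and 0 otherwise. For each I ⊆ P, the function f_I : 2^P → ℝ defined by f_I(A) = p^{−|I|/2} (−p)^{|I ∩ A|} is an eigenvector of Q with eigenvalue (−p)^{|I|}, i.e., Σ_{A'} Q(A, A') f_I(A') = (−p)^{|I|} f_I(A) for all A ⊆ P. -/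
/-!
Both `Q(A, ·)` and `(-p)^{|I ∩ ·|}` factor over the points of `P`: an element of `A'` contributes
`(1 - p)` if it lies in `A` and `-p` if it lies in `I`, an element outside `A'` contributes `p` if it
lies in `A` and `0` otherwise. Hence `∑_{A'} Q(A, A') (-p)^{|I ∩ A'|}` expands a product over `P` of
one-point sums, which equal `p²`, `1`, `-p`, `1` according as the point lies in `A ∩ I`, `A \ I`,
`I \ A`, or neither; that product is `(-p)^{|I|} (-p)^{|I ∩ A|}`.
-/

open Finset

variable {α : Type*} [Fintype α] [DecidableEq α]

/-- The transition matrix of the rowmotion Markov chain on the Boolean lattice `2^P`: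
`Q(I, I') = p^{|P \ I'|} (1 - p)^{|I ∩ I'|}` if `P \ I' ⊆ I`, and `0` otherwise. -/
noncomputable def Qmat (p : ℝ) (I I' : Finset α) : ℝ :=
  if univ \ I' ⊆ I then p ^ (univ \ I').card * (1 - p) ^ (I ∩ I').card else 0

/-- The eigenfunction `f_I(A) = p^{-|I|/2} (-p)^{|I ∩ A|}`. -/
noncomputable def fEig (p : ℝ) (I A : Finset α) : ℝ :=
  p ^ (-(I.card : ℝ) / 2) * (-p) ^ (I ∩ A).card

lemma Finset.pow_card_inter_eq_prod {ι M : Type*} [DecidableEq ι] [CommMonoid M]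
    (c : M) (s t : Finset ι) : c ^ (s ∩ t).card = ∏ x ∈ t, if x ∈ s then c else 1 := by
  rw [prod_ite_mem, prod_const, inter_comm]

lemma Qmat_eq_prod (p : ℝ) (A A' : Finset α) :
    Qmat p A A' = (∏ x ∈ A', if x ∈ A then 1 - p else 1) * ∏ x ∈ A'ᶜ, if x ∈ A then p else 0 := by
  rw [← pow_card_inter_eq_prod, compl_eq_univ_sdiff, Qmat]
  split_ifs with hsub
  · rw [prod_congr rfl fun x hx => if_pos (hsub hx), prod_const, mul_comm]
  · obtain ⟨x, hx, hxA⟩ := not_subset.1 hsub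
    rw [prod_eq_zero hx (if_neg hxA), mul_zero]

lemma sum_Qmat_mul_neg_pow_card_inter (p : ℝ) (I A : Finset α) :
    ∑ A' : Finset α, Qmat p A A' * (-p) ^ (I ∩ A').card
      = (-p) ^ I.card * (-p) ^ (I ∩ A).card := by
  have hsummand : ∀ A' : Finset α, Qmat p A A' * (-p) ^ (I ∩ A').card
      = (∏ x ∈ A', (if x ∈ A then 1 - p else 1) * (if x ∈ I then -p else 1))
          * ∏ x ∈ A'ᶜ, if x ∈ A then p else 0 := fun A' => by
    rw [Qmat_eq_prod, pow_card_inter_eq_prod, prod_mul_distrib]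
    ring
  have hI : (-p) ^ I.card = ∏ x, if x ∈ I then -p else 1 := by
    rw [← pow_card_inter_eq_prod, inter_univ]
  simp only [hsummand, ← Fintype.prod_add, hI, pow_card_inter_eq_prod (-p) I A,
    ← Fintype.prod_ite_mem A, ← prod_mul_distrib]
  refine prod_congr rfl fun x _ => ?_
  split_ifs <;> ring

theorem fEig_is_eigenvector_general (p : ℝ) (I : Finset α) :
    ∀ A : Finset α,
      ∑ A' : Finset α, Qmat p A A' * fEig p I A' = (-p) ^ I.card * fEig p I A := by
  intro A
  simp only [fEig, mul_left_comm (Qmat p A _), ← mul_sum, sum_Qmat_mul_neg_pow_card_inter]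
  ring

/-- Each `f_I` is an eigenvector of `Q` with eigenvalue `(-p)^{|I|}`. -/
theorem fEig_is_eigenvector (p : ℝ) (hp : 0 < p ∧ p < 1) (I : Finset α) :
    ∀ A : Finset α,
      ∑ A' : Finset α, Qmat p A A' * fEig p I A' = (-p) ^ I.card * fEig p I A :=
  fEig_is_eigenvector_general p I
end

section
/- Let P be an n-element antichain with rowmotion Markov chain as above, all probabilities equal to p ∈ (0,1), and let X_t be the size of the state at time t with X_0 = 0. With f(x) = 1 − (1+p)x/n, the variance of f(X_t) equals p/n − p^{2t}/n + ((1−p)/n)(−p)^t. Moreover, if X is the size of a set distributed according to the stationary distribution π(A) = p^{−|A|}/(1 + 1/p)^n, then Var(f(X)) = p/n and E[f(X)] = 0. -/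
/-!
Started from the empty set, the law of the state stays a product Bernoulli measure: if every
element is present independently with probability `a`, then after one step it is present
independently with probability `1 - p a`, since it is missing only if it was present and then
removed. Hence the law at time `t` is the product measure with parameter `a_t`, where
`(1 + p) a_t = 1 - (-p)^t`, and `π` is the product measure with parameter `1 / (1 + p)`. Under a
product measure `X` is binomial, so `f(X)` has mean `1 - (1 + p) a` and variance
`(1 + p)^2 a (1 - a) / n`.
-/

open Finset

variable {α : Type*} [Fintype α] [DecidableEq α]

/-- One step of the rowmotion Markov chain on `2^P` applied to a distribution `μ`. -/
noncomputable def qStep (p : ℝ) (μ : Finset α → ℝ) : Finset α → ℝ :=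
  fun A' => ∑ A : Finset α, μ A * Qmat p A A'

/-- The stationary distribution `π(A) = p^{-|A|} / (1 + 1/p)^n` on `2^P`. -/
noncomputable def statDist (p : ℝ) (n : ℕ) (A : Finset α) : ℝ :=
  (p⁻¹) ^ A.card / (1 + 1 / p) ^ n

/-- `f(x) = 1 - (1+p)x/n`. -/
noncomputable def fLin (p : ℝ) (n : ℕ) (x : ℝ) : ℝ := 1 - (1 + p) * x / n

theorem sum_powerset_binomial_weight {ι : Type*} (s : Finset ι) (a : ℝ) :
    ∑ A ∈ s.powerset, a ^ #A * (1 - a) ^ (#s - #A) = 1 := by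
  rw [sum_pow_mul_eq_add_pow, add_sub_cancel, one_pow]

section BinomialMoments

variable {ι : Type*} [DecidableEq ι]

theorem sum_powerset_insert_mul_binomial_weight {s : Finset ι} {i : ι} (hi : i ∉ s)
    (g : ℕ → ℝ) (a : ℝ) :
    ∑ A ∈ (insert i s).powerset, g #A * (a ^ #A * (1 - a) ^ (#(insert i s) - #A))
      = (1 - a) * ∑ A ∈ s.powerset, g #A * (a ^ #A * (1 - a) ^ (#s - #A))
        + a * ∑ A ∈ s.powerset, g (#A + 1) * (a ^ #A * (1 - a) ^ (#s - #A)) := by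
  rw [sum_powerset_insert hi, card_insert_of_notMem hi, mul_sum, mul_sum]
  refine congrArg₂ (· + ·) (sum_congr rfl fun A hA => ?_) (sum_congr rfl fun A hA => ?_) <;>
    have hAs : #A ≤ #s := card_le_card (mem_powerset.1 hA)
  · rw [show #s + 1 - #A = #s - #A + 1 by omega]
    ring
  · rw [card_insert_of_notMem fun h => hi (mem_powerset.1 hA h),
      show #s + 1 - (#A + 1) = #s - #A by omega]
    ring

theorem sum_powerset_card_mul_binomial_weight (s : Finset ι) (a : ℝ) :
    ∑ A ∈ s.powerset, (#A : ℝ) * (a ^ #A * (1 - a) ^ (#s - #A)) = #s * a := by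
  induction s using Finset.induction_on with
  | empty => simp
  | insert i s hi ih =>
    have h0 := sum_powerset_binomial_weight s a
    rw [sum_powerset_insert_mul_binomial_weight hi (fun k => (k : ℝ)), card_insert_of_notMem hi]
    simp only [Nat.cast_succ, add_mul, one_mul, sum_add_distrib, ih, h0]
    ring

theorem sum_powerset_card_sq_mul_binomial_weight (s : Finset ι) (a : ℝ) :
    ∑ A ∈ s.powerset, (#A : ℝ) ^ 2 * (a ^ #A * (1 - a) ^ (#s - #A))
      = #s * a + #s * (#s - 1) * a ^ 2 := by
  induction s using Finset.induction_on with
  | empty => simp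
  | insert i s hi ih =>
    have h0 := sum_powerset_binomial_weight s a
    have h1 := sum_powerset_card_mul_binomial_weight s a
    rw [sum_powerset_insert_mul_binomial_weight hi (fun k => (k : ℝ) ^ 2),
      card_insert_of_notMem hi]
    simp only [Nat.cast_succ, add_sq, mul_one, one_pow, add_mul, one_mul, sum_add_distrib, ih, h0,
      mul_assoc (2 : ℝ), ← mul_sum, h1]
    ring

end BinomialMoments

section AffineMoments

variable {ι : Type*} (s : Finset ι) (w x : ι → ℝ) (c d : ℝ)

theorem sum_mul_affine :
    ∑ i ∈ s, w i * (c + d * x i) = c * ∑ i ∈ s, w i + d * ∑ i ∈ s, w i * x i := by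
  rw [mul_sum, mul_sum, ← sum_add_distrib]
  exact sum_congr rfl fun i _ => by ring

theorem sum_mul_affine_sq_sub_sq (hw : ∑ i ∈ s, w i = 1) :
    ∑ i ∈ s, w i * (c + d * x i) ^ 2 - (∑ i ∈ s, w i * (c + d * x i)) ^ 2
      = d ^ 2 * (∑ i ∈ s, w i * x i ^ 2 - (∑ i ∈ s, w i * x i) ^ 2) := by
  have hsq : ∑ i ∈ s, w i * (c + d * x i) ^ 2
      = c ^ 2 * ∑ i ∈ s, w i + 2 * c * d * ∑ i ∈ s, w i * x i
        + d ^ 2 * ∑ i ∈ s, w i * x i ^ 2 := by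
    rw [mul_sum, mul_sum, mul_sum, ← sum_add_distrib, ← sum_add_distrib]
    exact sum_congr rfl fun i _ => by ring
  rw [hsq, sum_mul_affine, hw]
  ring

end AffineMoments

theorem fLin_eq_affine (p : ℝ) (n : ℕ) (x : ℝ) : fLin p n x = 1 + -((1 + p) / n) * x := by
  rw [fLin]
  ring

noncomputable def bernProd (a : ℝ) (A : Finset α) : ℝ :=
  a ^ #A * (1 - a) ^ #Aᶜ

theorem sum_bernProd_eq_sum_powerset_univ (g : ℕ → ℝ) (a : ℝ) :
    ∑ A : Finset α, bernProd a A * g #A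
      = ∑ A ∈ (univ : Finset α).powerset,
          g #A * (a ^ #A * (1 - a) ^ (#(univ : Finset α) - #A)) := by
  rw [powerset_univ]
  exact sum_congr rfl fun A _ => by rw [bernProd, card_compl, card_univ, mul_comm]

theorem sum_bernProd (a : ℝ) : ∑ A : Finset α, bernProd a A = 1 := by
  simp only [bernProd, card_compl]
  rw [Fintype.sum_pow_mul_eq_add_pow, add_sub_cancel, one_pow]

theorem sum_bernProd_mul_card (a : ℝ) :
    ∑ A : Finset α, bernProd a A * #A = Fintype.card α * a := by
  rw [sum_bernProd_eq_sum_powerset_univ (fun k => (k : ℝ)),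
    sum_powerset_card_mul_binomial_weight, card_univ]

theorem sum_bernProd_mul_card_sq_sub_sq (a : ℝ) :
    ∑ A : Finset α, bernProd a A * (#A : ℝ) ^ 2 - (∑ A : Finset α, bernProd a A * #A) ^ 2
      = Fintype.card α * a * (1 - a) := by
  rw [sum_bernProd_eq_sum_powerset_univ (fun k => (k : ℝ) ^ 2),
    sum_powerset_card_sq_mul_binomial_weight, sum_bernProd_mul_card, card_univ]
  ring

theorem sum_bernProd_mul_fLin (p a : ℝ) (hn : (Fintype.card α : ℝ) ≠ 0) :
    ∑ A : Finset α, bernProd a A * fLin p (Fintype.card α) #A = 1 - (1 + p) * a := by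
  simp only [fLin_eq_affine]
  rw [sum_mul_affine, sum_bernProd, sum_bernProd_mul_card]
  field_simp
  ring

theorem sum_bernProd_mul_fLin_sq_sub_sq (p a : ℝ) (hn : (Fintype.card α : ℝ) ≠ 0) :
    ∑ A : Finset α, bernProd a A * fLin p (Fintype.card α) #A ^ 2
        - (∑ A : Finset α, bernProd a A * fLin p (Fintype.card α) #A) ^ 2
      = (1 + p) ^ 2 * a * (1 - a) / Fintype.card α := by
  simp only [fLin_eq_affine]
  rw [sum_mul_affine_sq_sub_sq _ _ _ _ _ (sum_bernProd a), sum_bernProd_mul_card_sq_sub_sq]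
  field_simp

theorem sum_filter_compl_subset_eq_sum_powerset {M : Type*} [AddCommMonoid M]
    (B : Finset α) (F : Finset α → M) :
    ∑ A with Bᶜ ⊆ A, F A = ∑ S ∈ B.powerset, F (Bᶜ ∪ S) := by
  symm
  refine sum_nbij' (Bᶜ ∪ ·) (· ∩ B) ?_ ?_ ?_ ?_ fun _ _ => rfl <;>
    simp only [mem_powerset, mem_filter, mem_univ, true_and] <;> grind [mem_compl]

theorem qStep_bernProd (p a : ℝ) :
    qStep p (bernProd a : Finset α → ℝ) = bernProd (1 - p * a) := by
  funext B
  simp only [qStep, Qmat, ← compl_eq_univ_sdiff, mul_ite, mul_zero]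
  rw [← sum_filter, sum_filter_compl_subset_eq_sum_powerset]
  have hterm : ∀ S ∈ B.powerset,
      bernProd a (Bᶜ ∪ S) * (p ^ #Bᶜ * (1 - p) ^ #((Bᶜ ∪ S) ∩ B))
      = (a * p) ^ #Bᶜ * ((a * (1 - p)) ^ #S * (1 - a) ^ (#B - #S)) := by
    intro S hS
    rw [mem_powerset] at hS
    have hinter : (Bᶜ ∪ S) ∩ B = S := by
      rw [union_inter_distrib_right, inter_comm Bᶜ, inter_compl, empty_union, inter_eq_left.2 hS]
    have hcard : #(Bᶜ ∪ S) = #Bᶜ + #S :=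
      card_union_of_disjoint (disjoint_of_subset_right hS disjoint_compl_left)
    have hcard_compl : #(Bᶜ ∪ S)ᶜ = #B - #S := by
      rw [compl_union, compl_compl, ← sdiff_eq_inter_compl, card_sdiff_of_subset hS]
    rw [bernProd, hinter, hcard, hcard_compl, mul_pow, mul_pow]
    ring
  rw [sum_congr rfl hterm, ← mul_sum, sum_pow_mul_eq_add_pow, bernProd,
    show a * (1 - p) + (1 - a) = 1 - p * a by ring, show 1 - (1 - p * a) = a * p by ring, mul_comm]

theorem bernProd_zero : (bernProd 0 : Finset α → ℝ) = fun B => if B = ∅ then 1 else 0 := by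
  funext B
  by_cases hB : B = ∅ <;> simp [bernProd, hB]

theorem iterate_qStep_bernProd (p a : ℝ) (t : ℕ) :
    (qStep p)^[t] (bernProd a : Finset α → ℝ) = bernProd ((fun b => 1 - p * b)^[t] a) :=
  (Function.Semiconj.iterate_right (fun b => (qStep_bernProd p b).symm) t a).symm

theorem one_add_mul_iterate_zero (p : ℝ) (t : ℕ) :
    (1 + p) * (fun b => 1 - p * b)^[t] 0 = 1 - (-p) ^ t := by
  induction t with
  | zero => simp
  | succ t ih =>
    rw [Function.iterate_succ_apply', pow_succ]
    linear_combination (-p) * ih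

theorem statDist_eq_bernProd {p : ℝ} (hp : p ≠ 0) (hp' : 1 + p ≠ 0) :
    (statDist p (Fintype.card α) : Finset α → ℝ) = bernProd (1 / (1 + p)) := by
  funext A
  rw [statDist, bernProd, one_add_div hp, add_comm p, one_sub_div hp', add_sub_cancel_left,
    ← card_add_card_compl A, pow_add]
  simp only [div_pow, one_div, inv_pow]
  field_simp

/-- With `X_t` the size of the state of the rowmotion Markov chain on `2^P` at
time `t`, started at `X_0 = 0` (the empty set), one has
`Var(f(X_t)) = p/n - p^{2t}/n + ((1-p)/n)(-p)^t`; moreover, if `X` is the size of a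
set distributed according to the stationary distribution `π`, then `E[f(X)] = 0` and
`Var(f(X)) = p/n`. -/
theorem variance_f (p : ℝ) (hp : 0 < p ∧ p < 1) [Nonempty α] (t : ℕ) :
    ((∑ A : Finset α,
        (qStep p)^[t] (fun B => if B = (∅ : Finset α) then (1 : ℝ) else 0) A *
          fLin p (Fintype.card α) (A.card : ℝ) ^ 2)
      - (∑ A : Finset α,
          (qStep p)^[t] (fun B => if B = (∅ : Finset α) then (1 : ℝ) else 0) A *
            fLin p (Fintype.card α) (A.card : ℝ)) ^ 2
      = p / (Fintype.card α) - p ^ (2 * t) / (Fintype.card α)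
          + ((1 - p) / (Fintype.card α)) * (-p) ^ t) ∧
    (∑ A : Finset α, statDist p (Fintype.card α) A * fLin p (Fintype.card α) (A.card : ℝ))
      = 0 ∧
    ((∑ A : Finset α,
        statDist p (Fintype.card α) A * fLin p (Fintype.card α) (A.card : ℝ) ^ 2)
      - (∑ A : Finset α,
          statDist p (Fintype.card α) A * fLin p (Fintype.card α) (A.card : ℝ)) ^ 2
      = p / (Fintype.card α)) := by
  have hn : (Fintype.card α : ℝ) ≠ 0 := Nat.cast_ne_zero.2 Fintype.card_ne_zero
  have hp' : 1 + p ≠ 0 := by linarith [hp.1]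
  refine ⟨?_, ?_, ?_⟩
  · rw [← bernProd_zero, iterate_qStep_bernProd, sum_bernProd_mul_fLin_sq_sub_sq p _ hn]
    have ha := one_add_mul_iterate_zero p t
    set a := (fun b => 1 - p * b)^[t] 0
    rw [← (even_two_mul t).neg_pow, pow_mul']
    field_simp
    -- `(1 + p)^2 a (1 - a) = (1 + p) a * ((1 + p) - (1 + p) a)`, then substitute `ha`
    linear_combination (1 + p - (1 + p) * a - (1 - (-p) ^ t)) * ha
  · rw [statDist_eq_bernProd hp.1.ne' hp', sum_bernProd_mul_fLin p _ hn]
    field_simp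
    ring
  · rw [statDist_eq_bernProd hp.1.ne' hp', sum_bernProd_mul_fLin_sq_sub_sq p _ hn]
    field_simp
    ring
end
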